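/- arXiv:1703.04838 — 2 statements merged into one kernel-verified Lean document; each statement's English description precedes it below -/
import Mathlib

section
/- For every real α > 2 and every x ≥ 0, the SIR coverage function satisfies P_α(x) ≥ (1 + x)^(−2/(α−2)). -/
open MeasureTheory Filter Real Set

/-- The closed-form downlink SIR coverage denominator:
`h α x = 1 + ∫_1^∞ x / (x + w^(α/2)) dw`. -/
noncomputable def hcov (α x : ℝ) : ℝ := 1 + ∫ w in Set.Ioi (1 : ℝ), x / (x + w ^ (α / 2))

/-- The SIR coverage function `P_α(x) = h_α(x)⁻¹`. -/
noncomputable def Pcov (α x : ℝ) : ℝ := (hcov α x)⁻¹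

/-! With `β = α / 2`, write `I(x) = ∫_1^∞ x / (x + w^β) dw`. Integrating `w ↦ w · x / (x + w^β)`
by parts gives `I = β x I' - x / (1 + x)`, and comparing the integrand with `x w^(-β)` gives
`(β - 1) I ≤ x`. Together they yield the differential inequality
`(1 + x) I' ≤ (1 + I) / (β - 1)`, so `log (1 + I(x)) - log (1 + x) / (β - 1)` is antitone and
vanishes at `0`. Hence `1 + I(x) ≤ (1 + x)^(1/(β - 1))`, and `1 / (β - 1) = 2 / (α - 2)`. -/

open scoped Topology

theorem le_mul_one_add_rpow_of_hasDerivAt {g g' : ℝ → ℝ} {c x : ℝ}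
    (hcont : ContinuousOn g (Ici 0)) (hderiv : ∀ t ∈ Ioi (0 : ℝ), HasDerivAt g (g' t) t)
    (hpos : ∀ t ∈ Ici (0 : ℝ), 0 < g t)
    (hle : ∀ t ∈ Ioi (0 : ℝ), (1 + t) * g' t ≤ c * g t)
    (hx : 0 ≤ x) : g x ≤ g 0 * (1 + x) ^ c := by
  have hanti : AntitoneOn (fun t => log (g t) - c * log (1 + t)) (Ici 0) := by
    refine antitoneOn_of_hasDerivWithinAt_nonpos (f' := fun t => g' t / g t - c * (1 / (1 + t)))
      (convex_Ici 0) ?_ ?_ ?_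
    · refine (hcont.log fun t ht => (hpos t ht).ne').sub (continuousOn_const.mul ?_)
      exact ContinuousOn.log (by fun_prop) fun t (ht : 0 ≤ t) => by positivity
    · rw [interior_Ici]
      intro t (ht : 0 < t)
      have hlog := ((hasDerivAt_id t).const_add 1).log (by simp; positivity)
      exact (((hderiv t ht).log (hpos t ht.le).ne').sub (hlog.const_mul c)).hasDerivWithinAt
    · rw [interior_Ici]
      intro t (ht : 0 < t)
      rw [sub_nonpos, mul_one_div, div_le_div_iff₀ (hpos t ht.le) (by positivity)]
      linarith [hle t ht]
  have hx0 := hanti self_mem_Ici hx hx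
  simp only [add_zero, log_one, mul_zero, sub_zero] at hx0
  calc g x = exp (log (g x)) := (exp_log (hpos x hx)).symm
    _ ≤ exp (log (g 0) + log (1 + x) * c) := by gcongr; linarith
    _ = g 0 * (1 + x) ^ c := by
      rw [exp_add, exp_log (hpos 0 self_mem_Ici), rpow_def_of_pos (by positivity)]

namespace SIRCoverage

noncomputable def interference (β x : ℝ) : ℝ := ∫ w in Ioi (1 : ℝ), x / (x + w ^ β)

noncomputable def interferenceDeriv (β x : ℝ) : ℝ :=
  ∫ w in Ioi (1 : ℝ), w ^ β / (x + w ^ β) ^ 2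

variable {β x : ℝ}

lemma div_add_rpow_le (hx : 0 ≤ x) {w : ℝ} (hw : 0 < w) :
    x / (x + w ^ β) ≤ x * w ^ (-β) := by
  rw [rpow_neg hw.le, ← div_eq_mul_inv]
  exact div_le_div_of_nonneg_left hx (by positivity) (by linarith)

lemma rpow_div_add_rpow_sq_le (hx : 0 ≤ x) {w : ℝ} (hw : 0 < w) :
    w ^ β / (x + w ^ β) ^ 2 ≤ w ^ (-β) := by
  have hwβ : 0 < w ^ β := by positivity
  calc w ^ β / (x + w ^ β) ^ 2 ≤ w ^ β / (w ^ β) ^ 2 :=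
        div_le_div_of_nonneg_left hwβ.le (by positivity) (by gcongr; linarith)
    _ = w ^ (-β) := by rw [rpow_neg hw.le, sq, div_mul_cancel_left₀ hwβ.ne']

lemma integrableOn_div_add_rpow (hβ : 1 < β) (hx : 0 ≤ x) :
    IntegrableOn (fun w => x / (x + w ^ β)) (Ioi 1) := by
  refine ((integrableOn_Ioi_rpow_of_lt (neg_lt_neg hβ) one_pos).const_mul x).mono'
    (by fun_prop : Measurable fun w : ℝ => x / (x + w ^ β)).aestronglyMeasurable ?_
  filter_upwards [ae_restrict_mem measurableSet_Ioi] with w (hw : 1 < w)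
  have hw0 : 0 < w := one_pos.trans hw
  rw [norm_of_nonneg (by positivity)]
  exact div_add_rpow_le hx hw0

lemma integrableOn_rpow_div_add_rpow_sq (hβ : 1 < β) (hx : 0 ≤ x) :
    IntegrableOn (fun w => w ^ β / (x + w ^ β) ^ 2) (Ioi 1) := by
  refine (integrableOn_Ioi_rpow_of_lt (neg_lt_neg hβ) one_pos).mono'
    (by fun_prop : Measurable fun w : ℝ => w ^ β / (x + w ^ β) ^ 2).aestronglyMeasurable ?_
  filter_upwards [ae_restrict_mem measurableSet_Ioi] with w (hw : 1 < w)
  have hw0 : 0 < w := one_pos.trans hw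
  rw [norm_of_nonneg (by positivity)]
  exact rpow_div_add_rpow_sq_le hx hw0

lemma interference_zero : interference β 0 = 0 := by
  simp [interference]

lemma interference_nonneg (hx : 0 ≤ x) : 0 ≤ interference β x :=
  setIntegral_nonneg measurableSet_Ioi fun w (hw : 1 < w) => by
    have hw0 : 0 < w := one_pos.trans hw
    positivity

lemma interference_le (hβ : 1 < β) (hx : 0 ≤ x) : interference β x ≤ x / (β - 1) :=
  calc interference β x ≤ ∫ w in Ioi (1 : ℝ), x * w ^ (-β) :=
        setIntegral_mono_on (integrableOn_div_add_rpow hβ hx)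
          ((integrableOn_Ioi_rpow_of_lt (neg_lt_neg hβ) one_pos).const_mul x) measurableSet_Ioi
          fun w (hw : 1 < w) => div_add_rpow_le hx (one_pos.trans hw)
    _ = x / (β - 1) := by
      rw [integral_const_mul, integral_Ioi_rpow_of_lt (neg_lt_neg hβ) one_pos, one_rpow,
        show -β + 1 = -(β - 1) by ring, neg_div_neg_eq, mul_one_div]

lemma continuousWithinAt_interference_zero (hβ : 1 < β) :
    ContinuousWithinAt (interference β) (Ici 0) 0 := by
  have hupper : Tendsto (fun t : ℝ => t / (β - 1)) (𝓝[Ici 0] 0) (𝓝 0) := by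
    simpa using ((continuous_id.div_const (β - 1)).tendsto (0 : ℝ)).mono_left nhdsWithin_le_nhds
  rw [ContinuousWithinAt, interference_zero]
  exact tendsto_of_tendsto_of_tendsto_of_le_of_le' tendsto_const_nhds hupper
    (eventually_nhdsWithin_of_forall fun t ht => interference_nonneg ht)
    (eventually_nhdsWithin_of_forall fun t ht => interference_le hβ ht)

lemma hasDerivAt_interference (hβ : 1 < β) (hx : 0 < x) :
    HasDerivAt (interference β) (interferenceDeriv β x) x := by
  have hball : ∀ t ∈ Metric.ball x (x / 2), 0 < t := fun t ht => by
    rw [Metric.mem_ball, dist_eq_norm, norm_eq_abs, abs_lt] at ht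
    linarith
  refine (hasDerivAt_integral_of_dominated_loc_of_deriv_le (F := fun t w => t / (t + w ^ β))
    (F' := fun t w => w ^ β / (t + w ^ β) ^ 2) (bound := fun w => w ^ (-β))
    (Metric.ball_mem_nhds x (half_pos hx))
    (Eventually.of_forall fun t =>
      (by fun_prop : Measurable fun w : ℝ => t / (t + w ^ β)).aestronglyMeasurable)
    (integrableOn_div_add_rpow hβ hx.le)
    (by fun_prop : Measurable fun w : ℝ => w ^ β / (x + w ^ β) ^ 2).aestronglyMeasurable
    ?_ (integrableOn_Ioi_rpow_of_lt (neg_lt_neg hβ) one_pos) ?_).2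
  · filter_upwards [ae_restrict_mem measurableSet_Ioi] with w (hw : 1 < w) t ht
    have hw0 : 0 < w := one_pos.trans hw
    have ht0 := hball t ht
    rw [norm_of_nonneg (by positivity)]
    exact rpow_div_add_rpow_sq_le ht0.le hw0
  · filter_upwards [ae_restrict_mem measurableSet_Ioi] with w (hw : 1 < w) t ht
    have hw0 : 0 < w := one_pos.trans hw
    have hden : t + w ^ β ≠ 0 := by have := hball t ht; positivity
    refine ((hasDerivAt_id t).div ((hasDerivAt_id t).add_const (w ^ β)) hden).congr_deriv ?_
    simp only [id_eq, one_mul, mul_one]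
    ring

lemma tendsto_mul_div_add_rpow_atTop (hβ : 1 < β) (hx : 0 ≤ x) :
    Tendsto (fun w => w * (x / (x + w ^ β))) atTop (𝓝 0) := by
  have hupper : Tendsto (fun w : ℝ => x * w ^ (-(β - 1))) atTop (𝓝 0) := by
    simpa using (tendsto_rpow_neg_atTop (by linarith : 0 < β - 1)).const_mul x
  refine tendsto_of_tendsto_of_tendsto_of_le_of_le' tendsto_const_nhds hupper ?_ ?_
  · filter_upwards [eventually_gt_atTop 0] with w hw
    positivity
  · filter_upwards [eventually_gt_atTop 0] with w hw
    calc w * (x / (x + w ^ β)) ≤ w * (x * w ^ (-β)) := by gcongr; exact div_add_rpow_le hx hw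
      _ = x * w ^ (-(β - 1)) := by
        rw [neg_sub, rpow_sub hw, rpow_neg hw.le, rpow_one]
        field_simp

lemma interference_eq_mul_interferenceDeriv_sub (hβ : 1 < β) (hx : 0 ≤ x) :
    interference β x = β * x * interferenceDeriv β x - x / (1 + x) := by
  have hderiv : ∀ w ∈ Ici (1 : ℝ), HasDerivAt (fun w => w * (x / (x + w ^ β)))
      (x / (x + w ^ β) - β * x * (w ^ β / (x + w ^ β) ^ 2)) w := fun w (hw : 1 ≤ w) => by
    have hw0 : 0 < w := one_pos.trans_le hw
    have hden : x + w ^ β ≠ 0 := by positivity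
    have hpow : w * w ^ (β - 1) = w ^ β := by
      rw [← rpow_one_add' hw0.le (by linarith)]
      ring_nf
    have hrpow := hasDerivAt_rpow_const (p := β) (Or.inl hw0.ne')
    refine ((hasDerivAt_id w).mul ((hasDerivAt_const w x).div
      ((hasDerivAt_const w x).add hrpow) hden)).congr_deriv ?_
    simp only [id, Pi.div_apply, Pi.add_apply, one_mul, zero_mul, zero_add, zero_sub]
    rw [← hpow]
    field_simp
    ring
  have hibp := integral_Ioi_of_hasDerivAt_of_tendsto' hderiv
    ((integrableOn_div_add_rpow hβ hx).sub
      ((integrableOn_rpow_div_add_rpow_sq hβ hx).const_mul (β * x)))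
    (tendsto_mul_div_add_rpow_atTop hβ hx)
  rw [integral_sub (integrableOn_div_add_rpow hβ hx)
    ((integrableOn_rpow_div_add_rpow_sq hβ hx).const_mul (β * x)), integral_const_mul] at hibp
  rw [one_rpow, one_mul, add_comm x 1] at hibp
  unfold interference interferenceDeriv
  linarith

lemma one_add_mul_interferenceDeriv_le (hβ : 1 < β) (hx : 0 < x) :
    (1 + x) * interferenceDeriv β x ≤ (β - 1)⁻¹ * (1 + interference β x) := by
  have hibp := interference_eq_mul_interferenceDeriv_sub hβ hx.le
  have hle := (le_div_iff₀' (by linarith : 0 < β - 1)).mp (interference_le hβ hx.le)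
  have hnonneg := interference_nonneg (β := β) hx.le
  have hcancel : (1 + x) * (x / (1 + x)) = x := mul_div_cancel₀ x (by positivity)
  rw [← div_eq_inv_mul, le_div_iff₀ (by linarith),
    ← mul_le_mul_iff_right₀ (by positivity : 0 < β * x)]
  calc β * x * ((1 + x) * interferenceDeriv β x * (β - 1))
      = (β - 1) * ((1 + x) * interference β x + x) := by
        rw [hibp]; linear_combination (β - 1) * hcancel
    _ ≤ β * x * (1 + interference β x) := by nlinarith

lemma one_add_interference_le_rpow (hβ : 1 < β) (hx : 0 ≤ x) :
    1 + interference β x ≤ (1 + x) ^ (β - 1)⁻¹ := by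
  have hcont : ContinuousOn (fun t => 1 + interference β t) (Ici 0) := fun t (ht : 0 ≤ t) => by
    rcases ht.eq_or_lt with rfl | ht
    · exact (continuousWithinAt_interference_zero hβ).const_add 1
    · exact ((hasDerivAt_interference hβ ht).continuousAt.const_add 1).continuousWithinAt
  simpa [interference_zero] using le_mul_one_add_rpow_of_hasDerivAt hcont
    (fun t ht => (hasDerivAt_interference hβ ht).const_add 1)
    (fun t (ht : 0 ≤ t) => by linarith [interference_nonneg (β := β) ht])
    (fun t ht => one_add_mul_interferenceDeriv_le hβ ht) hx

end SIRCoverage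

/-- For every `α > 2` and `x ≥ 0`, `P_α(x) ≥ (1 + x)^(-2/(α-2))`. -/
theorem sir_coverage_ultra_reliability_lower_bound (α : ℝ) (hα : 2 < α) (x : ℝ) (hx : 0 ≤ x) :
    (1 + x) ^ (-(2 / (α - 2))) ≤ Pcov α x := by
  have hβ : 1 < α / 2 := by linarith
  have hexponent : (α / 2 - 1)⁻¹ = 2 / (α - 2) := by
    rw [inv_eq_one_div, div_eq_div_iff (by linarith) (by linarith)]
    ring
  have hbound : hcov α x ≤ (1 + x) ^ (2 / (α - 2)) :=
    hexponent ▸ SIRCoverage.one_add_interference_le_rpow hβ hx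
  have hpos : 0 < hcov α x := by
    linarith [SIRCoverage.interference_nonneg (β := α / 2) hx,
      show hcov α x = 1 + SIRCoverage.interference (α / 2) x from rfl]
  rw [Pcov, rpow_neg (by linarith)]
  exact inv_anti₀ hpos hbound
end

section
/- For every real α > 2, lim_{x→∞} x^(2/α) · P_α(x) = (α/(2π))·sin(2π/α); in particular the lower bound of Lemma 2 is asymptotically tight as x → ∞. -/
open MeasureTheory Filter Real Set

open Topology

/-! Substituting `w = x^{2/α} u` gives `hcov α x = 1 + x^{2/α} J(x^{-2/α})` with
`J(c) = ∫_c^∞ du / (1 + u^{α/2})`, so `x^{2/α} P_α(x) = (x^{-2/α} + J(x^{-2/α}))⁻¹ → J(0)⁻¹`.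
With `p = α/2`, the substitutions `u = t^{1/p}` and `t = s/(1-s)` turn `J(0)` into `p⁻¹` times the
Beta integral `B(1/p, 1 - 1/p) = Γ(1/p) Γ(1 - 1/p) = π / sin(π/p)`. -/

theorem integral_Ioo_rpow_mul_one_sub_rpow {s t : ℝ} (hs : 0 < s) (ht : 0 < t) :
    ∫ x in Ioo (0 : ℝ) 1, x ^ (s - 1) * (1 - x) ^ (t - 1) =
      Gamma s * Gamma t / Gamma (s + t) := by
  have hB := Complex.betaIntegral_eq_Gamma_mul_div s t (by simpa) (by simpa)
  rw [Complex.betaIntegral, intervalIntegral.integral_of_le zero_le_one,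
    integral_Ioc_eq_integral_Ioo] at hB
  apply Complex.ofReal_injective
  rw [← integral_complex_ofReal]
  push_cast
  rw [← Complex.ofReal_add] at hB
  simp only [Complex.Gamma_ofReal] at hB
  rw [← hB]
  refine setIntegral_congr_fun measurableSet_Ioo fun x hx => ?_
  rw [Complex.ofReal_cpow hx.1.le, Complex.ofReal_cpow (by linarith [hx.2])]
  push_cast
  ring_nf

theorem integral_comp_div_one_add_Ioi {E : Type*} [NormedAddCommGroup E] [NormedSpace ℝ E]
    (g : ℝ → E) :
    ∫ t in Ioi 0, ((1 + t) ^ 2)⁻¹ • g (t / (1 + t)) = ∫ x in Ioo (0 : ℝ) 1, g x := by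
  have himg : (fun t : ℝ => t / (1 + t)) '' Ioi 0 = Ioo 0 1 := by
    ext y
    constructor
    · rintro ⟨t, ht : 0 < t, rfl⟩
      exact ⟨by positivity, (div_lt_one (by positivity)).2 (by linarith)⟩
    · rintro ⟨hy0, hy1⟩
      refine ⟨y / (1 - y), div_pos hy0 (by linarith), ?_⟩
      field_simp
      ring
  have hderiv : ∀ t ∈ Ioi (0 : ℝ),
      HasDerivWithinAt (fun t : ℝ => t / (1 + t)) ((1 + t) ^ 2)⁻¹ (Ioi 0) t := by
    intro t (ht : 0 < t)
    have h := (hasDerivAt_id' t).div ((hasDerivAt_id' t).const_add 1) (by positivity : 1 + t ≠ 0)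
    rw [show (1 * (1 + t) - t * 1) / (1 + t) ^ 2 = ((1 + t) ^ 2)⁻¹ by ring] at h
    exact h.hasDerivWithinAt
  have hinj : InjOn (fun t : ℝ => t / (1 + t)) (Ioi 0) := by
    intro a (ha : 0 < a) b (hb : 0 < b) hab
    field_simp at hab
    linarith
  rw [← himg, integral_image_eq_integral_abs_deriv_smul measurableSet_Ioi hderiv hinj]
  refine setIntegral_congr_fun measurableSet_Ioi fun t (ht : 0 < t) => ?_
  rw [abs_of_pos (by positivity)]

theorem integral_Ioi_rpow_mul_one_add_rpow_neg {s u : ℝ} (hs : 0 < s) (hu : 0 < u) :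
    ∫ t in Ioi (0 : ℝ), t ^ (s - 1) * (1 + t) ^ (-(s + u)) =
      Gamma s * Gamma u / Gamma (s + u) := by
  rw [← integral_Ioo_rpow_mul_one_sub_rpow hs hu, ← integral_comp_div_one_add_Ioi]
  refine setIntegral_congr_fun measurableSet_Ioi fun t (ht : 0 < t) => ?_
  have h1t : 0 < 1 + t := by linarith
  have hsplit : (1 + t) ^ (-(s + u)) =
      (1 + t) ^ (-(s - 1)) * (1 + t) ^ (-(u - 1)) * (1 + t) ^ (-2 : ℝ) := by
    rw [← rpow_add h1t, ← rpow_add h1t]; ring_nf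
  rw [show 1 - t / (1 + t) = (1 + t)⁻¹ by field_simp; ring, div_rpow ht.le h1t.le,
    inv_rpow h1t.le, ← rpow_neg h1t.le, hsplit, rpow_neg h1t.le, rpow_neg h1t.le (2 : ℝ),
    rpow_two, smul_eq_mul]
  field_simp

theorem integral_Ioi_inv_one_add_rpow {p : ℝ} (hp : 1 < p) :
    ∫ u in Ioi (0 : ℝ), (1 + u ^ p)⁻¹ = π / (p * sin (π / p)) := by
  have hp0 : 0 < p := by linarith
  have hδ : 0 < p⁻¹ := inv_pos.2 hp0
  have hδ1 : 0 < 1 - p⁻¹ := sub_pos.2 (inv_lt_one_of_one_lt₀ hp)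
  have hbeta := integral_comp_rpow_Ioi_of_pos hp0
    (g := fun y : ℝ => y ^ (p⁻¹ - 1) * (1 + y) ^ (-(p⁻¹ + (1 - p⁻¹))))
  rw [integral_Ioi_rpow_mul_one_add_rpow_neg hδ hδ1, add_sub_cancel, Gamma_one, div_one,
    Gamma_mul_Gamma_one_sub] at hbeta
  rw [show π / (p * sin (π / p)) = p⁻¹ * (π / sin (π * p⁻¹)) by field_simp, ← hbeta,
    ← integral_const_mul]
  refine setIntegral_congr_fun measurableSet_Ioi fun u (hu : 0 < u) => ?_
  have hpow : u ^ (p - 1) * (u ^ p) ^ (p⁻¹ - 1) = 1 := by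
    rw [← rpow_mul hu.le, ← rpow_add hu, show p - 1 + p * (p⁻¹ - 1) = 0 by field_simp; ring,
      rpow_zero]
  rw [rpow_neg_one, smul_eq_mul]
  calc (1 + u ^ p)⁻¹
      = p⁻¹ * p * (u ^ (p - 1) * (u ^ p) ^ (p⁻¹ - 1)) * (1 + u ^ p)⁻¹ := by
        rw [hpow, inv_mul_cancel₀ hp0.ne']; ring
    _ = _ := by ring

theorem integrableOn_Ioi_inv_one_add_rpow {p : ℝ} (hp : 1 < p) :
    IntegrableOn (fun u : ℝ => (1 + u ^ p)⁻¹) (Ioi 0) := by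
  rw [← Ioc_union_Ioi_eq_Ioi zero_le_one]
  refine IntegrableOn.union ?_ ?_
  · refine (ContinuousOn.integrableOn_Icc fun u hu => ?_).mono_set Ioc_subset_Icc_self
    have : 0 < 1 + u ^ p := by have := rpow_nonneg hu.1 p; linarith
    exact ((continuousAt_const.add (continuousAt_rpow_const u p (Or.inr (by linarith)))).inv₀
      this.ne').continuousWithinAt
  · refine (integrableOn_Ioi_rpow_of_lt (by linarith : -p < -1) one_pos).mono'
      (by fun_prop) ((ae_restrict_iff' measurableSet_Ioi).2 (.of_forall fun u (hu : 1 < u) => ?_))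
    have hup : 0 < u ^ p := rpow_pos_of_pos (by linarith) p
    rw [norm_inv, Real.norm_of_nonneg (by linarith), rpow_neg (by linarith)]
    exact inv_anti₀ hup (by linarith)

theorem tendsto_setIntegral_Ioi_nhdsGT {E : Type*} [NormedAddCommGroup E] [NormedSpace ℝ E]
    {f : ℝ → E} {a : ℝ} (hf : IntegrableOn f (Ioi a)) :
    Tendsto (fun c => ∫ x in Ioi c, f x) (𝓝[>] a) (𝓝 (∫ x in Ioi a, f x)) := by
  have hIoc : Tendsto (fun c => ∫ x in Ioc a c, f x) (𝓝[>] a) (𝓝 0) := by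
    have hvol : Tendsto (fun c => volume.restrict (Ioi a) (Ioc a c)) (𝓝[>] a) (𝓝 0) := by
      have hlen : Tendsto (fun c => ENNReal.ofReal (c - a)) (𝓝[>] a) (𝓝 0) := by
        rw [← ENNReal.ofReal_zero, ← sub_self a]
        exact (ENNReal.tendsto_ofReal (tendsto_id.sub_const a)).mono_left nhdsWithin_le_nhds
      refine tendsto_of_tendsto_of_tendsto_of_le_of_le tendsto_const_nhds hlen (fun _ => zero_le)
        fun c => ?_
      exact (Measure.restrict_apply_le _ _).trans Real.volume_Ioc.le
    refine (hf.tendsto_setIntegral_nhds_zero hvol).congr fun c => ?_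
    rw [Measure.restrict_restrict measurableSet_Ioc, inter_eq_left.2 Ioc_subset_Ioi_self]
  have := hIoc.const_sub (∫ x in Ioi a, f x)
  rw [sub_zero] at this
  refine this.congr' (eventually_nhdsWithin_of_forall fun c (hc : a < c) => ?_)
  dsimp only
  rw [sub_eq_iff_eq_add', ← setIntegral_union Ioc_disjoint_Ioi_same measurableSet_Ioi
    (hf.mono_set Ioc_subset_Ioi_self) (hf.mono_set (Ioi_subset_Ioi hc.le)),
    Ioc_union_Ioi_eq_Ioi hc.le]

theorem integral_Ioi_div_add_rpow {p x a : ℝ} (hp : 0 < p) (hx : 0 < x) (ha : 0 ≤ a) :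
    ∫ w in Ioi a, x / (x + w ^ p) = x ^ p⁻¹ * ∫ u in Ioi (x ^ (-p⁻¹) * a), (1 + u ^ p)⁻¹ := by
  have hb : 0 < x ^ (-p⁻¹) := rpow_pos_of_pos hx _
  rw [← integral_comp_mul_left_Ioi' (fun u => (1 + u ^ p)⁻¹) a hb, smul_eq_mul, ← mul_assoc,
    ← rpow_add hx, add_neg_cancel, rpow_zero, one_mul]
  refine setIntegral_congr_fun measurableSet_Ioi fun w (hw : a < w) => ?_
  rw [mul_rpow hb.le (by linarith), ← rpow_mul hx.le, neg_mul, inv_mul_cancel₀ hp.ne',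
    rpow_neg_one]
  field_simp

theorem hcov_eq_one_add_rpow_mul_integral {α x : ℝ} (hα : 0 < α) (hx : 0 < x) :
    hcov α x = 1 + x ^ (2 / α) * ∫ u in Ioi (x ^ (-(2 / α))), (1 + u ^ (α / 2))⁻¹ := by
  rw [hcov, integral_Ioi_div_add_rpow (by positivity) hx zero_le_one, mul_one, inv_div]

/-- For every `α > 2`, `lim_{x→∞} x^(2/α)·P_α(x) = (α/(2π))·sin(2π/α)`;
the lower bound of Lemma 2 is asymptotically tight as `x → ∞`. -/
theorem sir_coverage_tail_asymptotics (α : ℝ) (hα : 2 < α) :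
    Filter.Tendsto (fun x : ℝ => x ^ (2 / α) * Pcov α x) Filter.atTop
      (nhds ((α / (2 * π)) * Real.sin (2 * π / α))) := by
  set p := α / 2 with hp_def
  have hp : 1 < p := by linarith
  have hδ : 2 / α = p⁻¹ := (inv_div α 2).symm
  have hsin : 0 < sin (π / p) :=
    sin_pos_of_pos_of_lt_pi (by positivity) (div_lt_self pi_pos hp)
  have hvanish : Tendsto (fun x : ℝ => x ^ (-p⁻¹)) atTop (𝓝 0) :=
    tendsto_rpow_neg_atTop (inv_pos.2 (by positivity))
  have htail := (tendsto_setIntegral_Ioi_nhdsGT (integrableOn_Ioi_inv_one_add_rpow hp)).comp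
    (tendsto_nhdsWithin_iff.2
      ⟨hvanish, (eventually_gt_atTop 0).mono fun x hx => rpow_pos_of_pos hx _⟩)
  rw [integral_Ioi_inv_one_add_rpow hp] at htail
  have hlim := (hvanish.add htail).inv₀ (by rw [zero_add]; positivity)
  rw [zero_add] at hlim
  convert hlim.congr' ?_ using 2
  · rw [hp_def]; field_simp
  · filter_upwards [eventually_gt_atTop 0] with x hx
    rw [Pcov, hcov_eq_one_add_rpow_mul_integral (by linarith) hx, ← hp_def, hδ,
      Function.comp_apply, rpow_neg hx.le]
    have hxp : 0 < x ^ p⁻¹ := rpow_pos_of_pos hx _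
    field_simp
end
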